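/- arXiv:2301.05424 — 4 statements merged into one kernel-verified Lean document; each statement's English description precedes it below -/
import Mathlib

section
/- Let θ : ℝ⁴ → ℝ and U : ℝ⁴ → ℝ⁴ be differentiable at a point x, with θ(x) > 0 and g_{αβ}U^α(y)U^β(y) = −1 for all y in a neighborhood of x, where g = diag(−1,1,1,1). Define ψ : ℝ⁴ → ℝ⁴ by ψ_γ := U_γ/θ (where U_γ = g_{γδ}U^δ). Then for every direction w ∈ ℝ⁴: (i) Dθ_x(w) = θ(x)² U^γ(x) (Dψ_γ)_x(w), and (ii) (DU^σ)_x(w) = θ(x) Π^{σγ}(x) (Dψ_γ)_x(w), where Π^{σγ} = g^{σγ} + U^σU^γ. -/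
/-!
Differentiating `ψ_γ = U_γ / θ` gives `θ Dψ_γ = DU_γ - U_γ Dθ / θ`. Contracting with `U^γ`, the
normalisation `U^γ U_γ = -1` and its derivative `U^γ DU_γ = 0` leave `θ² U^γ Dψ_γ = Dθ`. Raising
the index of `θ Dψ_γ` and adding `U^σ` times this contraction then recovers `DU^σ`.
-/

open scoped BigOperators

/-- The Minkowski metric `diag(-1,1,1,1)` (diagonal entries). -/
noncomputable def gmink : Fin 4 → ℝ := fun i => if i = 0 then -1 else 1

/-- The spatial projector `Π^{σγ} = g^{σγ} + U^σ U^γ`. -/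
noncomputable def proj (U : Fin 4 → ℝ) : Fin 4 → Fin 4 → ℝ :=
  fun σ γ => (if σ = γ then gmink σ else 0) + U σ * U γ

open Filter Topology

theorem gmink_mul_self (i : Fin 4) : gmink i * gmink i = 1 := by
  unfold gmink
  split_ifs <;> norm_num

theorem sum_proj_mul (u v : Fin 4 → ℝ) (σ : Fin 4) :
    ∑ γ, proj u σ γ * v γ = gmink σ * v σ + u σ * ∑ γ, u γ * v γ := by
  simp only [proj, add_mul, Finset.sum_add_distrib, ite_mul, zero_mul, Finset.sum_ite_eq,
    Finset.mem_univ, if_true, Finset.mul_sum]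
  exact congrArg _ (Finset.sum_congr rfl fun γ _ => by ring)

theorem sum_mul_sub_eq_of_sum_eq {ι : Type*} [Fintype ι] (g u a : ι → ℝ) {θ : ℝ}
    (hθ : θ ≠ 0) (t : ℝ) (hnorm : ∑ i, g i * u i * u i = -1) (horth : ∑ i, g i * u i * a i = 0) :
    ∑ i, u i * (g i * a i / θ - g i * u i * t / θ ^ 2) = t / θ ^ 2 := by
  have hsplit : ∀ i, u i * (g i * a i / θ - g i * u i * t / θ ^ 2)
      = g i * u i * a i / θ - g i * u i * u i * (t / θ ^ 2) := fun i => by ring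
  simp only [hsplit, Finset.sum_sub_distrib, ← Finset.sum_div, ← Finset.sum_mul, hnorm, horth]
  field_simp
  ring

section Calculus

open ContinuousLinearMap

variable {E : Type*} [NormedAddCommGroup E] [NormedSpace ℝ E] {x : E}

theorem fderiv_div_apply {u θ : E → ℝ} (hu : DifferentiableAt ℝ u x)
    (hθ : DifferentiableAt ℝ θ x) (hθx : θ x ≠ 0) (w : E) :
    fderiv ℝ (fun y => u y / θ y) x w
      = fderiv ℝ u x w / θ x - u x * fderiv ℝ θ x w / θ x ^ 2 := by
  have hinv : HasFDerivAt (fun y => (θ y)⁻¹) _ x :=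
    (hasFDerivAt_inv hθx).comp x hθ.hasFDerivAt
  simp only [div_eq_mul_inv]
  rw [(hu.hasFDerivAt.fun_mul hinv).fderiv]
  simp only [add_apply, smul_apply, comp_apply, toSpanSingleton_apply, smul_eq_mul, mul_neg]
  ring

theorem sum_mul_fderiv_eq_zero_of_eventually_eq {ι : Type*} [Fintype ι] (g : ι → ℝ)
    {u : E → ι → ℝ} (hu : ∀ i, DifferentiableAt ℝ (fun y => u y i) x) {c : ℝ}
    (h : ∀ᶠ y in 𝓝 x, ∑ i, g i * u y i * u y i = c) (w : E) :
    ∑ i, g i * u x i * fderiv ℝ (fun y => u y i) x w = 0 := by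
  have hsum : HasFDerivAt (fun y => ∑ i, g i * u y i * u y i)
      (∑ i, ((g i * u x i) • fderiv ℝ (fun y => u y i) x
        + u x i • (g i • fderiv ℝ (fun y => u y i) x))) x :=
    HasFDerivAt.fun_sum fun i _ =>
      ((hu i).hasFDerivAt.const_mul (g i)).fun_mul (hu i).hasFDerivAt
  have hzero := (hasFDerivAt_const (𝕜 := ℝ) c x).congr_of_eventuallyEq h
  have hw := congrArg (fun L => L w) (hsum.unique hzero)
  simp only [sum_apply, add_apply, smul_apply, smul_eq_mul, zero_apply] at hw
  rw [← mul_right_inj' (two_ne_zero (α := ℝ)), Finset.mul_sum, mul_zero, ← hw]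
  exact Finset.sum_congr rfl fun i _ => by ring

end Calculus

/-- Gradients of temperature `θ` and velocity `U` expressed through the gradient of
the Godunov–Boillat variables `ψ_γ = U_γ/θ = gmink γ * U^γ / θ`. -/
theorem stmt2 (θ : (Fin 4 → ℝ) → ℝ) (U : (Fin 4 → ℝ) → Fin 4 → ℝ) (x : Fin 4 → ℝ)
    (hθ : DifferentiableAt ℝ θ x)
    (hU : ∀ σ, DifferentiableAt ℝ (fun y => U y σ) x)
    (hpos : 0 < θ x)
    (hunit : ∀ᶠ y in nhds x, ∑ α, gmink α * U y α * U y α = -1) :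
    ∀ w : Fin 4 → ℝ,
      (fderiv ℝ θ x w
        = θ x ^ 2 * ∑ γ, U x γ * fderiv ℝ (fun y => gmink γ * U y γ / θ y) x w) ∧
      (∀ σ : Fin 4, fderiv ℝ (fun y => U y σ) x w
        = θ x * ∑ γ, proj (U x) σ γ * fderiv ℝ (fun y => gmink γ * U y γ / θ y) x w) := by
  intro w
  have hθx : θ x ≠ 0 := hpos.ne'
  have hψ : ∀ γ, fderiv ℝ (fun y => gmink γ * U y γ / θ y) x w
      = gmink γ * fderiv ℝ (fun y => U y γ) x w / θ x
        - gmink γ * U x γ * fderiv ℝ θ x w / θ x ^ 2 := fun γ => by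
    rw [fderiv_div_apply ((hU γ).const_mul _) hθ hθx, fderiv_const_mul (hU γ)]
    rfl
  have hcontract : ∑ γ, U x γ * fderiv ℝ (fun y => gmink γ * U y γ / θ y) x w
      = fderiv ℝ θ x w / θ x ^ 2 := by
    simp only [hψ]
    exact sum_mul_sub_eq_of_sum_eq gmink _ _ hθx _ hunit.self_of_nhds
      (sum_mul_fderiv_eq_zero_of_eventually_eq gmink hU hunit w)
  refine ⟨by rw [hcontract]; field_simp, fun σ => ?_⟩
  rw [sum_proj_mul, hcontract, hψ σ]
  field_simp
  linear_combination
    (U x σ * fderiv ℝ θ x w - fderiv ℝ (fun y => U y σ) x w * θ x) * gmink_mul_self σ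
end

section
/- Let χ, σ, μ, θ be positive reals and U ∈ ℝ⁴ unit timelike (g_{αβ}U^αU^β = −1, g = diag(−1,1,1,1)). Then for every (V, V₄) ∈ ℝ⁴ × ℝ with (V, V₄) ≠ 0, the quadratic form −χθ² (U^αV_α)² − σθ (g^{αγ}V_αV_γ + (U^αV_α)²) − μ V₄² is strictly negative. (This is the HKM negative-definiteness condition B^{aβcδ}U_βU_δ V_a V_c < 0 for the proposed system.) -/
/-!
Write `U = (u₀, u)` and `V = (v₀, v)` in time and space components, so `-u₀² + |u|² = -1`, and put
`s = u₀ v₀ + u·v` and `Π = -v₀² + |v|² + s²` (the term `Π^{αγ} V_α V_γ`). Eliminating `v₀` through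
`u₀ v₀ = s - u·v` gives `u₀² Π = |v + s u|² + (|u|²|v|² - (u·v)²) ≥ 0` by Cauchy–Schwarz; when `s = 0`
this reads `u₀² Π ≥ |v|²`, so `Π = s = 0` forces `V = 0`. Hence the three terms `χθ² s²`, `σθ Π`,
`μ V₄²` are nonnegative and not all zero.
-/

open scoped BigOperators

section SpatialSplit

variable {ι : Type*} [Fintype ι] (u₀ v₀ : ℝ) (u v : ι → ℝ)

lemma sq_mul_projection_eq (hU : -u₀ ^ 2 + ∑ i, u i ^ 2 = -1) :
    u₀ ^ 2 * (-v₀ ^ 2 + ∑ i, v i ^ 2 + (u₀ * v₀ + ∑ i, u i * v i) ^ 2) =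
      ∑ i, (v i + (u₀ * v₀ + ∑ j, u j * v j) * u i) ^ 2 +
        ((∑ i, u i ^ 2) * (∑ i, v i ^ 2) - (∑ i, u i * v i) ^ 2) := by
  set s := u₀ * v₀ + ∑ j, u j * v j with hs
  have hexpand : ∑ i, (v i + s * u i) ^ 2 =
      ∑ i, v i ^ 2 + 2 * s * ∑ i, u i * v i + s ^ 2 * ∑ i, u i ^ 2 := by
    rw [Finset.mul_sum, Finset.mul_sum, ← Finset.sum_add_distrib, ← Finset.sum_add_distrib]
    exact Finset.sum_congr rfl fun i _ => by ring
  rw [hexpand]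
  linear_combination (-(∑ i, v i ^ 2) - s ^ 2) * hU + (s + ∑ i, u i * v i) * hs

lemma sq_pos_of_unit_timelike (hU : -u₀ ^ 2 + ∑ i, u i ^ 2 = -1) : 0 < u₀ ^ 2 := by
  nlinarith [Finset.sum_nonneg fun i (_ : i ∈ Finset.univ) => sq_nonneg (u i)]

lemma projection_nonneg (hU : -u₀ ^ 2 + ∑ i, u i ^ 2 = -1) :
    0 ≤ -v₀ ^ 2 + ∑ i, v i ^ 2 + (u₀ * v₀ + ∑ i, u i * v i) ^ 2 := by
  have hCS := Finset.sum_mul_sq_le_sq_mul_sq Finset.univ u v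
  refine nonneg_of_mul_nonneg_right ?_ (sq_pos_of_unit_timelike u₀ u hU)
  rw [sq_mul_projection_eq u₀ v₀ u v hU]
  exact add_nonneg (Finset.sum_nonneg fun i _ => sq_nonneg _) (sub_nonneg.mpr hCS)

lemma eq_zero_of_projection_eq_zero (hU : -u₀ ^ 2 + ∑ i, u i ^ 2 = -1)
    (hs : u₀ * v₀ + ∑ i, u i * v i = 0)
    (hP : -v₀ ^ 2 + ∑ i, v i ^ 2 + (u₀ * v₀ + ∑ i, u i * v i) ^ 2 = 0) :
    v₀ = 0 ∧ v = 0 := by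
  have hCS := Finset.sum_mul_sq_le_sq_mul_sq Finset.univ u v
  have key := sq_mul_projection_eq u₀ v₀ u v hU
  rw [hs] at hP key
  simp only [hP, zero_mul, add_zero, mul_zero] at key
  have hsum : ∑ i, v i ^ 2 = 0 := by
    nlinarith [Finset.sum_nonneg fun i (_ : i ∈ Finset.univ) => sq_nonneg (v i)]
  have hv : v = 0 := funext fun i => pow_eq_zero_iff two_ne_zero |>.mp <|
    (Finset.sum_eq_zero_iff_of_nonneg fun i _ => sq_nonneg (v i)).mp hsum i (Finset.mem_univ i)
  subst hv
  have hu₀ : u₀ ≠ 0 := ne_zero_pow two_ne_zero (sq_pos_of_unit_timelike u₀ u hU).ne'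
  simp only [Pi.zero_apply, mul_zero, Finset.sum_const_zero, add_zero] at hs
  exact ⟨(mul_eq_zero.mp hs).resolve_left hu₀, rfl⟩

end SpatialSplit

lemma sum_gmink_mul_self (V : Fin 4 → ℝ) :
    ∑ α, gmink α * V α * V α = -V 0 ^ 2 + ∑ i : Fin 3, V i.succ ^ 2 := by
  simp only [Fin.sum_univ_succ (n := 3), gmink, Fin.succ_ne_zero, if_true, if_false, neg_mul,
    one_mul, sq]

/-- HKM negative-definiteness of the quadratic form given by the contracted
principal coefficients `B^{aβcδ}U_βU_δ` of the proposed system. -/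
theorem stmt6 (χ σ μ θ : ℝ) (hχ : 0 < χ) (hσ : 0 < σ) (hμ : 0 < μ) (hθ : 0 < θ)
    (U : Fin 4 → ℝ) (hU : ∑ α, gmink α * U α * U α = -1) :
    ∀ (V : Fin 4 → ℝ) (V4 : ℝ), ¬(V = 0 ∧ V4 = 0) →
      -(χ * θ ^ 2) * (∑ α, U α * V α) ^ 2
        - σ * θ * ((∑ α, gmink α * V α * V α) + (∑ α, U α * V α) ^ 2)
        - μ * V4 ^ 2 < 0 := by
  intro V V4 hne
  rw [sum_gmink_mul_self] at hU ⊢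
  rw [Fin.sum_univ_succ]
  set s := U 0 * V 0 + ∑ i : Fin 3, U i.succ * V i.succ
  set P := -V 0 ^ 2 + ∑ i : Fin 3, V i.succ ^ 2 + s ^ 2
  have hP : 0 ≤ P :=
    projection_nonneg (U 0) (V 0) (fun i : Fin 3 => U i.succ) (fun i : Fin 3 => V i.succ) hU
  have hpos : 0 < V4 ^ 2 ∨ 0 < s ^ 2 ∨ 0 < P := by
    by_contra! h
    obtain ⟨h4, hs, hP0⟩ := h
    rw [sq_nonpos_iff] at h4 hs
    obtain ⟨h0, hsucc⟩ := eq_zero_of_projection_eq_zero (U 0) (V 0) (fun i : Fin 3 => U i.succ)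
      (fun i : Fin 3 => V i.succ) hU hs (le_antisymm hP0 hP)
    exact hne ⟨funext fun α => Fin.cases h0 (congrFun hsucc) α, h4⟩
  have hχθ : 0 < χ * θ ^ 2 := by positivity
  have hσθ : 0 < σ * θ := by positivity
  rcases hpos with h | h | h <;> nlinarith [mul_nonneg hχθ.le (sq_nonneg s), mul_nonneg hσθ.le hP,
    mul_nonneg hμ.le (sq_nonneg V4), mul_pos hμ h, mul_pos hχθ h, mul_pos hσθ h]
end

section
/- Let χ, η, μ, θ be positive reals and ζ̃ ≥ −η/3. Let U, N ∈ ℝ⁴ satisfy g_{αβ}U^αU^β = −1, g_{αβ}N^αN^β = 1, g_{αβ}U^αN^β = 0 (g = diag(−1,1,1,1)). Then for every (V, V₄) ∈ ℝ⁴ × ℝ with (V, V₄) ≠ 0, the quadratic form χθ² (U^αV_α)² + ηθ (g^{αγ}V_αV_γ + (U^αV_α)²) + ((1/3)η + ζ̃)θ (N^αV_α)² + μ V₄² is strictly positive. (This is the HKM positive-definiteness condition B^{aβcδ}N_βN_δ V_a V_c > 0 for the proposed system.) -/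
open scoped BigOperators

/-!
The form splits as `χθ² (U·V)² + ηθ Π(V,V) + (η/3 + ζ̃)θ (N·V)² + μ V₄²`, every term nonnegative.
Here `Π(V,V) = g(W,W)` for `W = V + (U·V) U♭`, which is `g`-orthogonal to `U`, and the orthogonal
complement of a timelike vector is spacelike (Cauchy–Schwarz on the spatial parts).
Hence `Π(V,V) ≥ 0`, with `Π(V,V) > 0` when `U·V = 0` and `V ≠ 0`; otherwise the `χ`-term or
the `μ`-term is positive.
-/

namespace Minkowski

variable {n : ℕ}

/-- `diag(-1,1,…,1)` is its own inverse, so `normSq` serves for vectors and covectors alike;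
`u ⬝ᵥ w` pairs a vector `u` with a covector `w`. -/
noncomputable def sign (n : ℕ) : Fin (n + 1) → ℝ := fun i => if i = 0 then -1 else 1

noncomputable def normSq (w : Fin (n + 1) → ℝ) : ℝ := ∑ i, sign n i * w i * w i

theorem sign_mul_self (i : Fin (n + 1)) : sign n i * sign n i = 1 := by
  unfold sign; split_ifs <;> norm_num

theorem normSq_eq_neg_sq_add_sum (w : Fin (n + 1) → ℝ) :
    normSq w = -w 0 ^ 2 + ∑ i : Fin n, w i.succ ^ 2 := by
  simp [normSq, sign, Fin.sum_univ_succ, Fin.succ_ne_zero, sq]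

theorem normSq_pos_of_dotProduct_eq_zero {u w : Fin (n + 1) → ℝ} (hu : normSq u < 0)
    (huw : u ⬝ᵥ w = 0) (hw : w ≠ 0) : 0 < normSq w := by
  rw [normSq_eq_neg_sq_add_sum] at hu ⊢
  rw [dotProduct, Fin.sum_univ_succ] at huw
  have hcs := Finset.sum_mul_sq_le_sq_mul_sq Finset.univ (fun i : Fin n => u i.succ)
    (fun i => w i.succ)
  set Su := ∑ i : Fin n, u i.succ ^ 2
  set Sw := ∑ i : Fin n, w i.succ ^ 2
  have hu0 : u 0 ≠ 0 := fun h => by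
    have : 0 ≤ Su := by positivity
    simp only [h] at hu; linarith
  have hSw : 0 < Sw := by
    refine lt_of_le_of_ne (by positivity) fun hSw => hw ?_
    have hw' : ∀ i : Fin n, w i.succ = 0 := fun i => by
      simpa using (Finset.sum_eq_zero_iff_of_nonneg (fun i _ => sq_nonneg (w i.succ))).1
        hSw.symm i (Finset.mem_univ _)
    have hw0 : w 0 = 0 := by
      simpa [hw', hu0] using huw
    funext i
    exact Fin.cases hw0 hw' i
  have htime : u 0 * w 0 = -∑ i : Fin n, u i.succ * w i.succ := by linarith
  have : u 0 ^ 2 * w 0 ^ 2 < u 0 ^ 2 * Sw :=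
    calc u 0 ^ 2 * w 0 ^ 2 = (∑ i : Fin n, u i.succ * w i.succ) ^ 2 := by
          rw [← mul_pow, htime, neg_sq]
      _ ≤ Su * Sw := hcs
      _ < u 0 ^ 2 * Sw := by gcongr; linarith
  linarith [lt_of_mul_lt_mul_left this (sq_nonneg (u 0))]

theorem normSq_nonneg_of_dotProduct_eq_zero {u w : Fin (n + 1) → ℝ} (hu : normSq u < 0)
    (huw : u ⬝ᵥ w = 0) : 0 ≤ normSq w := by
  rcases eq_or_ne w 0 with rfl | hw
  · simp [normSq]
  · exact (normSq_pos_of_dotProduct_eq_zero hu huw hw).le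

theorem normSq_add_sq_dotProduct_nonneg {u : Fin (n + 1) → ℝ} (hu : normSq u = -1)
    (w : Fin (n + 1) → ℝ) : 0 ≤ normSq w + (u ⬝ᵥ w) ^ 2 := by
  set a := u ⬝ᵥ w
  have ha : ∑ i, u i * w i = a := rfl
  have hu' : ∑ i, sign n i * u i * u i = -1 := hu
  let p : Fin (n + 1) → ℝ := fun i => w i + a * (sign n i * u i)
  have hp : normSq p = normSq w + a ^ 2 := by
    have hterm : ∀ i, sign n i * p i * p i = sign n i * w i * w i + 2 * a * (u i * w i)
        + a ^ 2 * (sign n i * u i * u i) := fun i => by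
      linear_combination (2 * a * u i * w i + a ^ 2 * sign n i * u i * u i) * sign_mul_self i
    simp only [normSq, hterm, Finset.sum_add_distrib, ← Finset.mul_sum, ha, hu']
    ring
  have hup : u ⬝ᵥ p = 0 := by
    have hterm : ∀ i, u i * p i = u i * w i + a * (sign n i * u i * u i) := fun i => by ring
    simp only [dotProduct, hterm, Finset.sum_add_distrib, ← Finset.mul_sum, ha, hu']
    ring
  rw [← hp]
  exact normSq_nonneg_of_dotProduct_eq_zero (by linarith) hup

end Minkowski

theorem stmt7_general (χ η μ θ ζt : ℝ) (hχ : 0 < χ) (hη : 0 < η) (hμ : 0 < μ) (hθ : 0 < θ)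
    (hζt : ζt ≥ -η / 3)
    (U N : Fin 4 → ℝ)
    (hU : ∑ α, gmink α * U α * U α = -1) :
    ∀ (V : Fin 4 → ℝ) (V4 : ℝ), ¬(V = 0 ∧ V4 = 0) →
      0 < χ * θ ^ 2 * (∑ α, U α * V α) ^ 2
        + η * θ * ((∑ α, gmink α * V α * V α) + (∑ α, U α * V α) ^ 2)
        + ((1/3) * η + ζt) * θ * (∑ α, N α * V α) ^ 2
        + μ * V4 ^ 2 := by
  intro V V4 hV
  change 0 < χ * θ ^ 2 * (U ⬝ᵥ V) ^ 2 + η * θ * (Minkowski.normSq V + (U ⬝ᵥ V) ^ 2)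
    + ((1/3) * η + ζt) * θ * (N ⬝ᵥ V) ^ 2 + μ * V4 ^ 2
  have hU' : Minkowski.normSq U = -1 := hU
  have hχ_term : 0 ≤ χ * θ ^ 2 * (U ⬝ᵥ V) ^ 2 := by positivity
  have hη_term : 0 ≤ η * θ * (Minkowski.normSq V + (U ⬝ᵥ V) ^ 2) :=
    mul_nonneg (by positivity) (Minkowski.normSq_add_sq_dotProduct_nonneg hU' V)
  have hζ_term : 0 ≤ ((1/3) * η + ζt) * θ * (N ⬝ᵥ V) ^ 2 :=
    mul_nonneg (mul_nonneg (by linarith) hθ.le) (sq_nonneg _)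
  have hμ_term : 0 ≤ μ * V4 ^ 2 := by positivity
  suffices 0 < χ * θ ^ 2 * (U ⬝ᵥ V) ^ 2 ∨ 0 < η * θ * (Minkowski.normSq V + (U ⬝ᵥ V) ^ 2)
      ∨ 0 < μ * V4 ^ 2 by
    rcases this with h | h | h <;> linarith
  by_cases hV0 : V = 0
  · have hV4 : V4 ≠ 0 := fun h => hV ⟨hV0, h⟩
    exact .inr <| .inr <| by positivity
  by_cases hUV : U ⬝ᵥ V = 0
  · have := Minkowski.normSq_pos_of_dotProduct_eq_zero (by linarith) hUV hV0
    exact .inr <| .inl <| by rw [hUV]; positivity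
  · exact .inl <| by positivity

/-- HKM positive-definiteness of the quadratic form given by the contracted
principal coefficients `B^{aβcδ}N_βN_δ` of the proposed system. -/
theorem stmt7 (χ η μ θ ζt : ℝ) (hχ : 0 < χ) (hη : 0 < η) (hμ : 0 < μ) (hθ : 0 < θ)
    (hζt : ζt ≥ -η / 3)
    (U N : Fin 4 → ℝ)
    (hU : ∑ α, gmink α * U α * U α = -1)
    (hN : ∑ α, gmink α * N α * N α = 1)
    (hUN : ∑ α, gmink α * U α * N α = 0) :
    ∀ (V : Fin 4 → ℝ) (V4 : ℝ), ¬(V = 0 ∧ V4 = 0) →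
      0 < χ * θ ^ 2 * (∑ α, U α * V α) ^ 2
        + η * θ * ((∑ α, gmink α * V α * V α) + (∑ α, U α * V α) ^ 2)
        + ((1/3) * η + ζt) * θ * (∑ α, N α * V α) ^ 2
        + μ * V4 ^ 2 :=
  stmt7_general χ η μ θ ζt hχ hη hμ hθ hζt U N hU
end

section
/- Let χ, η, μ, θ > 0, ζ̃ ∈ ℝ, σ := (4/3)η + ζ̃, and let U, N ∈ ℝ⁴ satisfy g_{αβ}U^αU^β = −1, g_{αβ}N^αN^β = 1, g_{αβ}U^αN^β = 0 (g = diag(−1,1,1,1)). Define, for (V,V₄) ∈ ℝ⁴ × ℝ, Q₊(V,V₄) := χθ²(U^αV_α)² + ηθ(g^{αγ}V_αV_γ + (U^αV_α)²) + ((1/3)η+ζ̃)θ(N^αV_α)² + μV₄² and Q₋(V,V₄) := −χθ²(U^αV_α)² − σθ(g^{αγ}V_αV_γ + (U^αV_α)²) − μV₄². Then: (i) Q₊(V,V₄) + Q₋(V,V₄) ≤ 0 for all (V,V₄) if and only if ζ̃ ≥ −η/3; (ii) Q₊ + Q₋ ≡ 0 if and only if ζ̃ = −η/3. (This expresses causality,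 respectively sharp causality, of the proposed system: all signal speeds are at most, respectively some equal to, the speed of light.) -/
/-!
Writing `K V = g(V,V) + (U·V)² - (N·V)²`, the sum `Q₊ + Q₋` is the ring identity
`-(η/3 + ζ̃) θ K V`. The form `K` is the squared length of the projection of (the raised) `V`
onto the orthogonal complement of `span {U, N}`. That complement is orthogonal to a timelike
vector, hence spacelike, so `K ≥ 0`; and the trace of the projection is `2 > 0`, so `K` is
positive somewhere. Both equivalences follow, as `θ > 0`.
-/

open scoped BigOperators

open Finset

section Minkowski

variable {n : ℕ}

def minkowskiSign (α : Fin (n + 1)) : ℝ := if α = 0 then -1 else 1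

theorem minkowskiSign_mul_self (α : Fin (n + 1)) : minkowskiSign α * minkowskiSign α = 1 := by
  unfold minkowskiSign; split_ifs <;> norm_num

/-- Being its own inverse, `diag(-1, 1, …, 1)` also serves as the inverse metric on covectors. -/
def minkowski : LinearMap.BilinForm ℝ (Fin (n + 1) → ℝ) :=
  LinearMap.mk₂ ℝ (fun x y => ∑ α, minkowskiSign α * x α * y α)
    (fun x x' y => by simp only [Pi.add_apply, mul_add, add_mul, sum_add_distrib])
    (fun c x y => by
      simp only [Pi.smul_apply, smul_eq_mul, mul_sum]; exact sum_congr rfl fun _ _ => by ring)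
    (fun x y y' => by simp only [Pi.add_apply, mul_add, sum_add_distrib])
    (fun c x y => by
      simp only [Pi.smul_apply, smul_eq_mul, mul_sum]; exact sum_congr rfl fun _ _ => by ring)

theorem minkowski_apply (x y : Fin (n + 1) → ℝ) :
    minkowski x y = ∑ α, minkowskiSign α * x α * y α := rfl

theorem minkowski_comm (x y : Fin (n + 1) → ℝ) : minkowski x y = minkowski y x := by
  simp only [minkowski_apply, mul_right_comm]

theorem minkowski_eq_neg_add_sum (x y : Fin (n + 1) → ℝ) :
    minkowski x y = -(x 0 * y 0) + ∑ i : Fin n, x i.succ * y i.succ := by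
  simp [minkowski_apply, Fin.sum_univ_succ, minkowskiSign, Fin.succ_ne_zero]

theorem minkowski_self_nonneg_of_orthogonal {u x : Fin (n + 1) → ℝ} (hu : minkowski u u < 0)
    (hux : minkowski u x = 0) : 0 ≤ minkowski x x := by
  rw [minkowski_eq_neg_add_sum] at hu hux ⊢
  have hcs := sum_mul_sq_le_sq_mul_sq univ (fun i : Fin n => u i.succ) (fun i => x i.succ)
  have hx : 0 ≤ ∑ i : Fin n, x i.succ ^ 2 := sum_nonneg fun i _ => sq_nonneg _
  have hu' : ∑ i : Fin n, u i.succ * u i.succ < u 0 ^ 2 := by linarith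
  simp only [← sq] at hu' ⊢
  have hu0 : 0 < u 0 ^ 2 := lt_of_le_of_lt (sum_nonneg fun i _ => sq_nonneg _) hu'
  have hmul : u 0 ^ 2 * x 0 ^ 2 ≤ u 0 ^ 2 * ∑ i : Fin n, x i.succ ^ 2 := by
    calc u 0 ^ 2 * x 0 ^ 2 = (∑ i : Fin n, u i.succ * x i.succ) ^ 2 := by
          rw [show ∑ i : Fin n, u i.succ * x i.succ = u 0 * x 0 by linarith]; ring
      _ ≤ _ := hcs
      _ ≤ _ := mul_le_mul_of_nonneg_right hu'.le hx
  linarith [le_of_mul_le_mul_left hmul hu0]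

def raiseIndex (v : Fin (n + 1) → ℝ) : Fin (n + 1) → ℝ := fun α => minkowskiSign α * v α

theorem minkowski_raiseIndex (x v : Fin (n + 1) → ℝ) :
    minkowski x (raiseIndex v) = x ⬝ᵥ v := by
  simp only [minkowski_apply, raiseIndex, dotProduct]
  refine sum_congr rfl fun α _ => ?_
  linear_combination x α * v α * minkowskiSign_mul_self α

theorem minkowski_raiseIndex_raiseIndex (v : Fin (n + 1) → ℝ) :
    minkowski (raiseIndex v) (raiseIndex v) = minkowski v v := by
  rw [minkowski_raiseIndex, minkowski_apply, dotProduct]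
  simp only [raiseIndex]

end Minkowski

section Screen

variable {n : ℕ} {u e : Fin (n + 1) → ℝ}

/-- `minkowski w w + (minkowski u w)^2 - (minkowski e w)^2` is the squared length of the
projection of `w` onto the orthogonal complement of `span {u, e}`. -/
theorem minkowski_add_sq_sub_sq_nonneg (hu : minkowski u u = -1) (he : minkowski e e = 1)
    (hue : minkowski u e = 0) (w : Fin (n + 1) → ℝ) :
    0 ≤ minkowski w w + minkowski u w ^ 2 - minkowski e w ^ 2 := by
  set p := w + minkowski u w • u - minkowski e w • e
  have hup : minkowski u p = 0 := by
    simp only [p, map_add, map_sub, map_smul, smul_eq_mul, hu, hue]; ring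
  have hpp : minkowski p p = minkowski w w + minkowski u w ^ 2 - minkowski e w ^ 2 := by
    simp only [p, map_add, map_sub, map_smul, LinearMap.add_apply, LinearMap.sub_apply,
      LinearMap.smul_apply, smul_eq_mul, hu, he, hue, minkowski_comm w u, minkowski_comm w e,
      minkowski_comm e u]
    ring
  exact hpp ▸ minkowski_self_nonneg_of_orthogonal (by rw [hu]; norm_num) hup

theorem minkowski_add_dotProduct_sq_sub_sq_nonneg (hu : minkowski u u = -1)
    (he : minkowski e e = 1) (hue : minkowski u e = 0) (v : Fin (n + 1) → ℝ) :
    0 ≤ minkowski v v + (u ⬝ᵥ v) ^ 2 - (e ⬝ᵥ v) ^ 2 := by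
  have h := minkowski_add_sq_sub_sq_nonneg hu he hue (raiseIndex v)
  rwa [minkowski_raiseIndex_raiseIndex, minkowski_raiseIndex, minkowski_raiseIndex] at h

/-- The trace of the projection onto `span {u, e}ᗮ` is `n - 1 > 0`, so the form does not vanish
on every basis covector. -/
theorem exists_minkowski_add_dotProduct_sq_sub_sq_pos (hn : 2 ≤ n) (hu : minkowski u u = -1)
    (he : minkowski e e = 1) (hue : minkowski u e = 0) :
    ∃ v, 0 < minkowski v v + (u ⬝ᵥ v) ^ 2 - (e ⬝ᵥ v) ^ 2 := by
  set K := fun v : Fin (n + 1) → ℝ => minkowski v v + (u ⬝ᵥ v) ^ 2 - (e ⬝ᵥ v) ^ 2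
  have htrace : ∑ α, minkowskiSign α * K (Pi.single α 1) = n - 1 := by
    have hK : ∀ α, K (Pi.single α 1) = minkowskiSign α + u α ^ 2 - e α ^ 2 := by
      intro α
      simp [K, minkowski_apply, Pi.single_apply]
    simp only [hK, mul_sub, mul_add, minkowskiSign_mul_self, sum_sub_distrib, sum_add_distrib]
    rw [minkowski_apply] at hu he
    simp only [sq, ← mul_assoc, hu, he, sum_const, card_univ, Fintype.card_fin]
    ring
  obtain ⟨α, -, hα⟩ : ∃ α ∈ univ, (0 : ℝ) < minkowskiSign α * K (Pi.single α 1) := by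
    refine exists_lt_of_sum_lt ?_
    rw [htrace, sum_const_zero]
    have hn' : (2 : ℝ) ≤ n := by exact_mod_cast hn
    linarith
  refine ⟨Pi.single α 1,
    lt_of_le_of_ne (minkowski_add_dotProduct_sq_sub_sq_nonneg hu he hue _) fun h => ?_⟩
  simp [K, ← h] at hα

end Screen

section Scalar

variable {X : Type*} {K : X → ℝ}

theorem forall_mul_nonneg_iff (hK : ∀ x, 0 ≤ K x) (hpos : ∃ x, 0 < K x) (c : ℝ) :
    (∀ x, 0 ≤ c * K x) ↔ 0 ≤ c := by
  obtain ⟨x₀, hx₀⟩ := hpos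
  exact ⟨fun h => nonneg_of_mul_nonneg_left (h x₀) hx₀, fun hc x => mul_nonneg hc (hK x)⟩

theorem forall_mul_eq_zero_iff (hpos : ∃ x, K x ≠ 0) (c : ℝ) :
    (∀ x, c * K x = 0) ↔ c = 0 := by
  obtain ⟨x₀, hx₀⟩ := hpos
  exact ⟨fun h => (mul_eq_zero.mp (h x₀)).resolve_right hx₀,
    fun hc x => by rw [hc, zero_mul]⟩

end Scalar

theorem gmink_eq_minkowskiSign : gmink = minkowskiSign := rfl

theorem stmt9_general (χ η μ θ ζt σ : ℝ) (hθ : 0 < θ)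
    (hσ : σ = (4/3) * η + ζt)
    (U N : Fin 4 → ℝ)
    (hU : ∑ α, gmink α * U α * U α = -1)
    (hN : ∑ α, gmink α * N α * N α = 1)
    (hUN : ∑ α, gmink α * U α * N α = 0) :
    (let Qp : (Fin 4 → ℝ) → ℝ → ℝ := fun V V4 =>
        χ * θ ^ 2 * (∑ α, U α * V α) ^ 2
        + η * θ * ((∑ α, gmink α * V α * V α) + (∑ α, U α * V α) ^ 2)
        + ((1/3) * η + ζt) * θ * (∑ α, N α * V α) ^ 2
        + μ * V4 ^ 2
     let Qm : (Fin 4 → ℝ) → ℝ → ℝ := fun V V4 =>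
        -(χ * θ ^ 2) * (∑ α, U α * V α) ^ 2
        - σ * θ * ((∑ α, gmink α * V α * V α) + (∑ α, U α * V α) ^ 2)
        - μ * V4 ^ 2
     ((∀ (V : Fin 4 → ℝ) (V4 : ℝ), Qp V V4 + Qm V V4 ≤ 0) ↔ ζt ≥ -η / 3) ∧
     ((∀ (V : Fin 4 → ℝ) (V4 : ℝ), Qp V V4 + Qm V V4 = 0) ↔ ζt = -η / 3)) := by
  intro Qp Qm
  set K : (Fin 4 → ℝ) → ℝ := fun V => minkowski V V + (U ⬝ᵥ V) ^ 2 - (N ⬝ᵥ V) ^ 2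
  have hsum : ∀ V V4, Qp V V4 + Qm V V4 = -((η / 3 + ζt) * θ * K V) := fun V V4 => by
    simp only [Qp, Qm, K, hσ, minkowski_apply, dotProduct, gmink_eq_minkowskiSign]
    ring
  have hK : ∀ V, 0 ≤ K V := minkowski_add_dotProduct_sq_sub_sq_nonneg hU hN hUN
  obtain ⟨V₀, hV₀⟩ : ∃ V, 0 < K V :=
    exists_minkowski_add_dotProduct_sq_sub_sq_pos (by norm_num) hU hN hUN
  simp only [hsum, neg_nonpos, neg_eq_zero, forall_const]
  rw [forall_mul_nonneg_iff hK ⟨V₀, hV₀⟩, forall_mul_eq_zero_iff ⟨V₀, hV₀.ne'⟩,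
    mul_nonneg_iff_of_pos_right hθ, mul_eq_zero, or_iff_left hθ.ne']
  constructor <;> constructor <;> intro h <;> linarith

/-- Causality (and sharp causality) of the proposed system: the sum of the two
contracted principal quadratic forms is nonpositive iff `ζ̃ ≥ −η/3`, and
identically zero iff `ζ̃ = −η/3`. -/
theorem stmt9 (χ η μ θ ζt σ : ℝ) (hχ : 0 < χ) (hη : 0 < η) (hμ : 0 < μ) (hθ : 0 < θ)
    (hσ : σ = (4/3) * η + ζt)
    (U N : Fin 4 → ℝ)
    (hU : ∑ α, gmink α * U α * U α = -1)
    (hN : ∑ α, gmink α * N α * N α = 1)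
    (hUN : ∑ α, gmink α * U α * N α = 0) :
    (let Qp : (Fin 4 → ℝ) → ℝ → ℝ := fun V V4 =>
        χ * θ ^ 2 * (∑ α, U α * V α) ^ 2
        + η * θ * ((∑ α, gmink α * V α * V α) + (∑ α, U α * V α) ^ 2)
        + ((1/3) * η + ζt) * θ * (∑ α, N α * V α) ^ 2
        + μ * V4 ^ 2
     let Qm : (Fin 4 → ℝ) → ℝ → ℝ := fun V V4 =>
        -(χ * θ ^ 2) * (∑ α, U α * V α) ^ 2
        - σ * θ * ((∑ α, gmink α * V α * V α) + (∑ α, U α * V α) ^ 2)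
        - μ * V4 ^ 2
     ((∀ (V : Fin 4 → ℝ) (V4 : ℝ), Qp V V4 + Qm V V4 ≤ 0) ↔ ζt ≥ -η / 3) ∧
     ((∀ (V : Fin 4 → ℝ) (V4 : ℝ), Qp V V4 + Qm V V4 = 0) ↔ ζt = -η / 3)) :=
  stmt9_general χ η μ θ ζt σ hθ hσ U N hU hN hUN
end
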